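/- arXiv:1510.07982 — 5 statements merged into one kernel-verified Lean document; each statement's English description precedes it below -/
import Mathlib

section
/- Let G be a graph of order n ≥ 2 with vertex set V = {1,…,n}, let {x,y} be an edge of G and let t ≥ 2 be an integer. Then the number of copies of {x,y} in S(G,t) whose x-endpoint has degree d(x) and whose y-endpoint has degree d(y) is f_{S(G,t)}(d(x),d(y)) = n^{t−2}·(n − d(x) − d(y) + τ(x,y)). -/
open Finset

/-- The generalized Sierpiński graph `S(G,t)` on words of length `t` over the vertex set. -/
def sierpinskiGraph {V : Type*} (G : SimpleGraph V) (t : ℕ) :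
    SimpleGraph (Fin t → V) where
  Adj u v := ∃ i : Fin t, (∀ j, j < i → u j = v j) ∧ u i ≠ v i ∧ G.Adj (u i) (v i) ∧
      ∀ j, i < j → u j = v i ∧ v j = u i
  symm := by
    constructor
    rintro u v ⟨i, h1, h2, h3, h4⟩
    exact ⟨i, fun j hj => (h1 j hj).symm, fun h => h2 h.symm, h3.symm,
      fun j hj => ⟨(h4 j hj).2, (h4 j hj).1⟩⟩
  loopless := by
    constructor
    rintro u ⟨i, _, h2, _⟩
    exact h2 rfl

instance {V : Type*} [Fintype V] [DecidableEq V] (G : SimpleGraph V) [DecidableRel G.Adj]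
    (t : ℕ) : DecidableRel (sierpinskiGraph G t).Adj := fun u v =>
  inferInstanceAs (Decidable (∃ i : Fin t, (∀ j, j < i → u j = v j) ∧ u i ≠ v i ∧
    G.Adj (u i) (v i) ∧ ∀ j, i < j → u j = v i ∧ v j = u i))

/-- The general Randić index `R_α`. -/
noncomputable def randic {V : Type*} [Fintype V] (G : SimpleGraph V) (α : ℝ) : ℝ := by
  classical
  exact ∑ e ∈ G.edgeFinset,
    Sym2.lift ⟨fun u v => ((G.degree u : ℝ) * (G.degree v : ℝ)) ^ α,
      fun u v => by dsimp only; rw [mul_comm]⟩ e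

/-- `τ(x,y)`: the number of triangles containing the adjacent vertices `x` and `y`. -/
def tau {V : Type*} [Fintype V] [DecidableEq V] (G : SimpleGraph V) [DecidableRel G.Adj]
    (x y : V) : ℕ := (G.neighborFinset x ∩ G.neighborFinset y).card

lemma tau_comm {V : Type*} [Fintype V] [DecidableEq V] (G : SimpleGraph V) [DecidableRel G.Adj]
    (x y : V) : tau G x y = tau G y x := by
  simp [tau, Finset.inter_comm]

/-- `ψ(t) = 1 + n + ⋯ + n^{t-1}`. -/
def psi (n t : ℕ) : ℕ := ∑ i ∈ Finset.range t, n ^ i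

/-- `τ(G)`: the number of triangles of `G`. -/
noncomputable def triangleCount {V : Type*} [Fintype V] (G : SimpleGraph V) : ℕ := by
  classical exact (G.cliqueFinset 3).card

/-- `u` is the `x`-endpoint and `v` the `y`-endpoint of a copy of the edge `{x,y}` in `S(G,t)`. -/
def isCopy {V : Type*} {t : ℕ} (x y : V) (u v : Fin t → V) : Prop :=
  ∃ i : Fin t, (∀ j, j < i → u j = v j) ∧ u i = x ∧ v i = y ∧ ∀ j, i < j → u j = y ∧ v j = x

instance {V : Type*} [DecidableEq V] {t : ℕ} (x y : V) (u v : Fin t → V) :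
    Decidable (isCopy x y u v) :=
  inferInstanceAs (Decidable (∃ i : Fin t, (∀ j, j < i → u j = v j) ∧ u i = x ∧ v i = y ∧
    ∀ j, i < j → u j = y ∧ v j = x))

/-- `f_{S(G,t)}(a,b)`: the number of copies of the edge `{x,y}` of `G` in `S(G,t)` whose
`x`-endpoint has degree `a` and whose `y`-endpoint has degree `b` in `S(G,t)`. -/
def copyCount {V : Type*} [Fintype V] [DecidableEq V] (G : SimpleGraph V) [DecidableRel G.Adj]
    (t : ℕ) (x y : V) (a b : ℕ) : ℕ :=
  (Finset.univ.filter fun p : (Fin t → V) × (Fin t → V) =>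
    isCopy x y p.1 p.2 ∧ (sierpinskiGraph G t).degree p.1 = a ∧
      (sierpinskiGraph G t).degree p.2 = b).card

/-!
A word `u` of length `m + 1` has the `d(u_last)` neighbours obtained by changing its last letter,
and at most one more: writing `u = w a b ⋯ b` with `a ≠ b`, the word `w b a ⋯ a` is a neighbour
exactly when `a ∼ b`. A copy of `{x,y}` at a level other than the last has endpoints
`w x y ⋯ y` and `w y x ⋯ x`, so both endpoints get this extra neighbour. Hence the copies counted
are those at the last level, `(w c x, w c y)`, and both endpoints have their base degree exactly
when `c ∉ N(x) ∪ N(y)`; there are `n^{t-2} (n - |N(x) ∪ N(y)|)` such words `w c`.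
-/

section Degree

variable {V : Type*} (G : SimpleGraph V) {m : ℕ}

lemma sierpinskiGraph_adj_iff_of_init_eq {u v : Fin (m + 1) → V}
    (h : Fin.init u = Fin.init v) :
    (sierpinskiGraph G (m + 1)).Adj u v ↔ G.Adj (u (Fin.last m)) (v (Fin.last m)) := by
  have hcast : ∀ j : Fin m, u j.castSucc = v j.castSucc := congr_fun h
  constructor
  · rintro ⟨i, -, hne, hadj, -⟩
    induction i using Fin.lastCases with
    | last => exact hadj
    | cast i => exact absurd (hcast i) hne
  · intro hadj
    refine ⟨Fin.last m, fun j hj => ?_, hadj.ne, hadj,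
      fun j hj => absurd hj (Fin.le_last j).not_gt⟩
    obtain ⟨j, rfl⟩ := Fin.exists_castSucc_eq.2 hj.ne
    exact hcast j

lemma sierpinskiGraph_adj_of_init_ne {u v : Fin (m + 1) → V}
    (h : (sierpinskiGraph G (m + 1)).Adj u v) (hne : Fin.init u ≠ Fin.init v) :
    ∃ i < Fin.last m, (∀ j, j < i → u j = v j) ∧ v i = u (Fin.last m) ∧
      G.Adj (u i) (u (Fin.last m)) ∧ ∀ j, i < j → u j = u (Fin.last m) ∧ v j = u i := by
  obtain ⟨i, hpre, -, hadj, htail⟩ := h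
  have hi : i < Fin.last m := by
    refine (Fin.le_last i).lt_of_ne fun hi => hne (funext fun j => hpre _ ?_)
    exact hi ▸ Fin.castSucc_lt_last j
  have hvi : v i = u (Fin.last m) := (htail _ hi).1.symm
  exact ⟨i, hi, hpre, hvi, hvi ▸ hadj, fun j hj => ⟨(htail j hj).1.trans hvi, (htail j hj).2⟩⟩

lemma eq_of_sierpinskiGraph_adj_of_init_ne {u v v' : Fin (m + 1) → V}
    (h : (sierpinskiGraph G (m + 1)).Adj u v) (hne : Fin.init u ≠ Fin.init v)
    (h' : (sierpinskiGraph G (m + 1)).Adj u v') (hne' : Fin.init u ≠ Fin.init v') :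
    v = v' := by
  obtain ⟨i, -, hpre, hvi, hadj, htail⟩ := sierpinskiGraph_adj_of_init_ne G h hne
  obtain ⟨i', -, hpre', hvi', hadj', htail'⟩ := sierpinskiGraph_adj_of_init_ne G h' hne'
  -- `i` is the last position where `u` differs from its last letter
  have hii' : i = i' := by
    rcases lt_trichotomy i i' with hlt | heq | hgt
    · exact absurd (htail i' hlt).1 hadj'.ne
    · exact heq
    · exact absurd (htail' i hgt).1 hadj.ne
  subst hii'
  funext j
  rcases lt_trichotomy j i with hlt | rfl | hgt
  · exact (hpre j hlt).symm.trans (hpre' j hlt)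
  · exact hvi.trans hvi'.symm
  · exact (htail j hgt).2.trans (htail' j hgt).2.symm

variable [Fintype V] [DecidableEq V] [DecidableRel G.Adj]

lemma card_neighborFinset_filter_init_ne (u : Fin (m + 1) → V) :
    #{v ∈ (sierpinskiGraph G (m + 1)).neighborFinset u | Fin.init u ≠ Fin.init v} =
      if ∃ k, (∀ j, k < j → u j = u (Fin.last m)) ∧ G.Adj (u k) (u (Fin.last m)) then 1
      else 0 := by
  split_ifs with hk
  · obtain ⟨k, htail, hadj⟩ := hk
    set v : Fin (m + 1) → V := fun j => if j < k then u j else if j = k then u (Fin.last m)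
      else u k with hv
    have hvk : v k = u (Fin.last m) := by simp [hv]
    have hk : k ≠ Fin.last m := fun hk => G.loopless.irrefl _ (hk ▸ hadj)
    have hv_adj : (sierpinskiGraph G (m + 1)).Adj u v := by
      refine ⟨k, fun j hj => by simp [hv, hj], hvk ▸ hadj.ne, hvk ▸ hadj, fun j hj => ?_⟩
      simp [hv, hj.not_gt, hj.ne', htail j hj]
    have hv_init : Fin.init u ≠ Fin.init v := by
      obtain ⟨k, rfl⟩ := Fin.exists_castSucc_eq.2 hk
      exact fun h => hadj.ne ((congr_fun h k).trans hvk)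
    refine le_antisymm (card_le_one.2 fun a ha b hb => ?_) (card_pos.2 ⟨v, ?_⟩)
    · rw [mem_filter, SimpleGraph.mem_neighborFinset] at ha hb
      exact eq_of_sierpinskiGraph_adj_of_init_ne G ha.1 ha.2 hb.1 hb.2
    · exact mem_filter.2 ⟨(SimpleGraph.mem_neighborFinset _ _ _).2 hv_adj, hv_init⟩
  · refine card_eq_zero.2 (filter_eq_empty_iff.2 fun v hv hne => hk ?_)
    rw [SimpleGraph.mem_neighborFinset] at hv
    obtain ⟨i, -, -, -, hadj, htail⟩ := sierpinskiGraph_adj_of_init_ne G hv hne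
    exact ⟨i, fun j hj => (htail j hj).1, hadj⟩

lemma card_neighborFinset_filter_init_eq (u : Fin (m + 1) → V) :
    #{v ∈ (sierpinskiGraph G (m + 1)).neighborFinset u | Fin.init u = Fin.init v} =
      G.degree (u (Fin.last m)) := by
  rw [← G.card_neighborFinset_eq_degree]
  refine card_nbij' (fun v => v (Fin.last m)) (Fin.snoc (Fin.init u)) ?_ ?_ ?_ ?_
  · intro v hv
    rw [mem_coe, mem_filter, SimpleGraph.mem_neighborFinset] at hv
    rw [mem_coe, SimpleGraph.mem_neighborFinset]
    exact (sierpinskiGraph_adj_iff_of_init_eq G hv.2).1 hv.1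
  · intro z hz
    have hinit : Fin.init u = Fin.init (Fin.snoc (Fin.init u) z) :=
      (Fin.init_snoc z (Fin.init u)).symm
    rw [mem_coe, SimpleGraph.mem_neighborFinset] at hz
    rw [mem_coe, mem_filter, SimpleGraph.mem_neighborFinset]
    refine ⟨(sierpinskiGraph_adj_iff_of_init_eq G hinit).2 ?_, hinit⟩
    rwa [Fin.snoc_last]
  · intro v hv
    rw [mem_coe, mem_filter] at hv
    simp only [hv.2, Fin.snoc_init_self]
  · intro z _
    exact Fin.snoc_last _ _

theorem sierpinskiGraph_degree (u : Fin (m + 1) → V) :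
    (sierpinskiGraph G (m + 1)).degree u = G.degree (u (Fin.last m)) +
      if ∃ k, (∀ j, k < j → u j = u (Fin.last m)) ∧ G.Adj (u k) (u (Fin.last m)) then 1
      else 0 := by
  rw [← card_neighborFinset_filter_init_eq, ← card_neighborFinset_filter_init_ne,
    card_filter_add_card_filter_not, SimpleGraph.card_neighborFinset_eq_degree]

lemma sierpinskiGraph_degree_snoc_of_adj {w : Fin (m + 1) → V} {z : V}
    (h : G.Adj (w (Fin.last m)) z) :
    (sierpinskiGraph G (m + 2)).degree (Fin.snoc w z) = G.degree z + 1 := by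
  have htail : ∀ j, (Fin.last m).castSucc < j → (Fin.snoc w z : Fin (m + 2) → V) j = z := by
    intro j hj
    induction j using Fin.lastCases with
    | last => exact Fin.snoc_last _ _
    | cast j => exact absurd (Fin.castSucc_lt_castSucc_iff.1 hj) (Fin.le_last j).not_gt
  rw [sierpinskiGraph_degree, Fin.snoc_last, if_pos ⟨_, htail, by simpa using h⟩]

lemma sierpinskiGraph_degree_snoc_of_not_adj {w : Fin (m + 1) → V} {z : V}
    (hne : w (Fin.last m) ≠ z) (h : ¬ G.Adj (w (Fin.last m)) z) :
    (sierpinskiGraph G (m + 2)).degree (Fin.snoc w z) = G.degree z := by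
  rw [sierpinskiGraph_degree, Fin.snoc_last, if_neg, add_zero]
  rintro ⟨k, htail, hadj⟩
  induction k using Fin.lastCases with
  | last => exact G.loopless.irrefl z (by rwa [Fin.snoc_last] at hadj)
  | cast k =>
    rw [Fin.snoc_castSucc] at hadj
    induction k using Fin.lastCases with
    | last => exact h hadj
    | cast k => exact hne (by simpa using htail (Fin.last m).castSucc (by simp))

end Degree

lemma isCopy_snoc {V : Type*} {m : ℕ} {x y : V} (w : Fin m → V) :
    isCopy x y (Fin.snoc w x : Fin (m + 1) → V) (Fin.snoc w y) := by
  refine ⟨Fin.last m, fun j hj => ?_, Fin.snoc_last _ _, Fin.snoc_last _ _,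
    fun j hj => absurd hj (Fin.le_last j).not_gt⟩
  obtain ⟨j, rfl⟩ := Fin.exists_castSucc_eq.2 hj.ne
  simp only [Fin.snoc_castSucc]

section Copies

variable {V : Type*} [Fintype V] [DecidableEq V] (G : SimpleGraph V) [DecidableRel G.Adj]
  {m : ℕ} {x y : V}

lemma isCopy.exists_snoc_of_degree (hxy : G.Adj x y) {u v : Fin (m + 1) → V}
    (h : isCopy x y u v) (hu : (sierpinskiGraph G (m + 1)).degree u = G.degree x)
    (hv : (sierpinskiGraph G (m + 1)).degree v = G.degree y) :
    ∃ w, Fin.snoc w x = u ∧ Fin.snoc w y = v := by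
  obtain ⟨i, hpre, hux, hvy, htail⟩ := h
  rcases (Fin.le_last i).lt_or_eq with hi | rfl
  · have hu' := sierpinskiGraph_degree G u
    have hv' := sierpinskiGraph_degree G v
    rw [(htail _ hi).1, if_pos ⟨i, fun j hj => (htail j hj).1, hux ▸ hxy⟩] at hu'
    rw [(htail _ hi).2, if_pos ⟨i, fun j hj => (htail j hj).2, hvy ▸ hxy.symm⟩] at hv'
    omega
  · have hinit : Fin.init u = Fin.init v := funext fun j => hpre _ (Fin.castSucc_lt_last j)
    exact ⟨Fin.init u, hux ▸ Fin.snoc_init_self u, hinit ▸ hvy ▸ Fin.snoc_init_self v⟩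

lemma degree_snoc_eq_degree_iff (hxy : G.Adj x y) (w : Fin (m + 1) → V) :
    (sierpinskiGraph G (m + 2)).degree (Fin.snoc w x) = G.degree x ∧
      (sierpinskiGraph G (m + 2)).degree (Fin.snoc w y) = G.degree y ↔
      w (Fin.last m) ∈ (G.neighborFinset x ∪ G.neighborFinset y)ᶜ := by
  simp only [mem_compl, mem_union, SimpleGraph.mem_neighborFinset, not_or]
  constructor
  · rintro ⟨hx, hy⟩
    refine ⟨fun h => ?_, fun h => ?_⟩
    · have := sierpinskiGraph_degree_snoc_of_adj G h.symm
      omega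
    · have := sierpinskiGraph_degree_snoc_of_adj G h.symm
      omega
  · rintro ⟨hx, hy⟩
    exact ⟨sierpinskiGraph_degree_snoc_of_not_adj G (fun h => hy (h ▸ hxy.symm)) (hx ·.symm),
      sierpinskiGraph_degree_snoc_of_not_adj G (fun h => hx (h ▸ hxy)) (hy ·.symm)⟩

lemma isCopy_and_degree_iff (hxy : G.Adj x y) (u v : Fin (m + 2) → V) :
    (isCopy x y u v ∧ (sierpinskiGraph G (m + 2)).degree u = G.degree x ∧
      (sierpinskiGraph G (m + 2)).degree v = G.degree y) ↔
      ∃ w : Fin (m + 1) → V, w (Fin.last m) ∈ (G.neighborFinset x ∪ G.neighborFinset y)ᶜ ∧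
        Fin.snoc w x = u ∧ Fin.snoc w y = v := by
  constructor
  · rintro ⟨h, hu, hv⟩
    obtain ⟨w, rfl, rfl⟩ := h.exists_snoc_of_degree G hxy hu hv
    exact ⟨w, (degree_snoc_eq_degree_iff G hxy w).1 ⟨hu, hv⟩, rfl, rfl⟩
  · rintro ⟨w, hw, rfl, rfl⟩
    exact ⟨isCopy_snoc w, (degree_snoc_eq_degree_iff G hxy w).2 hw⟩

theorem copyCount_eq_card (hxy : G.Adj x y) (m : ℕ) :
    copyCount G (m + 2) x y (G.degree x) (G.degree y) =
      #{w : Fin (m + 1) → V | w (Fin.last m) ∈ (G.neighborFinset x ∪ G.neighborFinset y)ᶜ} := by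
  have hinj : Function.Injective fun w : Fin (m + 1) → V =>
      ((Fin.snoc w x : Fin (m + 2) → V), (Fin.snoc w y : Fin (m + 2) → V)) :=
    fun w w' h => by simpa using congr_arg (fun p => Fin.init p.1) h
  rw [copyCount, ← card_image_of_injective _ hinj]
  congr 1
  ext ⟨u, v⟩
  simp only [mem_filter, mem_univ, true_and, mem_image, Prod.mk.injEq]
  exact isCopy_and_degree_iff G hxy u v

end Copies

lemma card_filter_last_mem {α : Type*} [Fintype α] [DecidableEq α] (m : ℕ) (s : Finset α) :
    #{w : Fin (m + 1) → α | w (Fin.last m) ∈ s} = Fintype.card α ^ m * #s := by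
  calc #{w : Fin (m + 1) → α | w (Fin.last m) ∈ s}
      = #((univ : Finset (Fin m → α)) ×ˢ s) :=
        card_nbij' (fun w => (Fin.init w, w (Fin.last m))) (fun p => Fin.snoc p.1 p.2)
          (fun w hw => by simpa using hw) (fun p hp => by simpa using hp)
          (fun w _ => Fin.snoc_init_self w) (fun p _ => by simp)
    _ = Fintype.card α ^ m * #s := by simp [card_product]

lemma card_compl_neighborFinset_union {V : Type*} [Fintype V] [DecidableEq V]
    (G : SimpleGraph V) [DecidableRel G.Adj] (x y : V) :
    (#(G.neighborFinset x ∪ G.neighborFinset y)ᶜ : ℤ) =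
      Fintype.card V - G.degree x - G.degree y + tau G x y := by
  have hunion := card_union_add_card_inter (G.neighborFinset x) (G.neighborFinset y)
  have hcompl := card_add_card_compl (G.neighborFinset x ∪ G.neighborFinset y)
  rw [G.card_neighborFinset_eq_degree, G.card_neighborFinset_eq_degree] at hunion
  rw [tau]
  omega

theorem copyCount_deg_deg_general {n : ℕ} (G : SimpleGraph (Fin n)) [DecidableRel G.Adj]
    (x y : Fin n) (hxy : G.Adj x y) (t : ℕ) (ht : 2 ≤ t) :
    (copyCount G t x y (G.degree x) (G.degree y) : ℤ) =
      (n : ℤ) ^ (t - 2) * ((n : ℤ) - G.degree x - G.degree y + tau G x y) := by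
  obtain ⟨m, rfl⟩ := Nat.exists_eq_add_of_le' ht
  rw [copyCount_eq_card G hxy, card_filter_last_mem, Fintype.card_fin, Nat.add_sub_cancel]
  push_cast
  rw [card_compl_neighborFinset_union, Fintype.card_fin]

theorem copyCount_deg_deg {n : ℕ} (hn : 2 ≤ n) (G : SimpleGraph (Fin n)) [DecidableRel G.Adj]
    (x y : Fin n) (hxy : G.Adj x y) (t : ℕ) (ht : 2 ≤ t) :
    (copyCount G t x y (G.degree x) (G.degree y) : ℤ) =
      (n : ℤ) ^ (t - 2) * ((n : ℤ) - G.degree x - G.degree y + tau G x y) :=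
  copyCount_deg_deg_general G x y hxy t ht
end

section
/- Let G be a graph of order n ≥ 2 with vertex set V = {1,…,n}, let {x,y} be an edge of G and let t ≥ 2 be an integer. Then the number of copies of {x,y} in S(G,t) whose x-endpoint has degree d(x)+1 and whose y-endpoint has degree d(y) is f_{S(G,t)}(d(x)+1,d(y)) = n^{t−2}·(d(x) − τ(x,y)) − ψ(t−2)·d(y). -/
open Finset

/-!
Write a word of length `k + 1` as `w a` with `w` of length `k`. The vertex `w a` of `S(G, k + 1)`
has degree `d(a) + 1` when `w` ends with a letter adjacent to `a` followed by a (possibly empty)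
run of `a`'s (`HasAdjRun G a w`), and degree `d(a)` otherwise. A copy of `{x, y}` whose pivot is
not the last position has endpoints ending in `y` and `x` whose degrees are both raised, so the
copies with degrees `(d(x) + 1, d(y))` are exactly the pairs `(w x, w y)` with `HasAdjRun G x w`
and not `HasAdjRun G y w`. Splitting off the last letter `a` of such a `w` forces
`a ∈ N(x) \ N(y)`; for `a ≠ y` every prefix `u` qualifies, and for `a = y` exactly the prefixes
without `HasAdjRun G y u`. Counting these needs `#{u | HasAdjRun G c u} = d(c) ψ(k)`, which follows
from the same splitting.
-/

lemma psi_succ (n k : ℕ) : psi n (k + 1) = psi n k + n ^ k := sum_range_succ _ k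

namespace Sierpinski

variable {V : Type*}

def HasAdjRun (G : SimpleGraph V) (c : V) {k : ℕ} (w : Fin k → V) : Prop :=
  ∃ i, (∀ j, i < j → w j = c) ∧ G.Adj (w i) c

instance (G : SimpleGraph V) [DecidableRel G.Adj] [DecidableEq V] (c : V) {k : ℕ}
    (w : Fin k → V) : Decidable (HasAdjRun G c w) :=
  inferInstanceAs (Decidable (∃ _, _))

lemma adjRun_witness_unique {G : SimpleGraph V} {c : V} {k : ℕ} {w : Fin k → V} {i i' : Fin k}
    (h : (∀ j, i < j → w j = c) ∧ G.Adj (w i) c)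
    (h' : (∀ j, i' < j → w j = c) ∧ G.Adj (w i') c) : i = i' := by
  rcases lt_trichotomy i i' with hlt | heq | hlt
  · exact absurd (h.1 i' hlt) h'.2.ne
  · exact heq
  · exact absurd (h'.1 i hlt) h.2.ne

lemma card_filter_adjRun_witness (G : SimpleGraph V) [DecidableRel G.Adj] [DecidableEq V]
    {k : ℕ} (c : V) (w : Fin k → V) :
    #{i | (∀ j, i < j → w j = c) ∧ G.Adj (w i) c} = if HasAdjRun G c w then 1 else 0 := by
  split_ifs with h
  · obtain ⟨i, hi⟩ := h
    refine card_eq_one.mpr ⟨i, ext fun i' => ?_⟩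
    simpa using ⟨fun hi' => adjRun_witness_unique hi' hi, by rintro rfl; exact hi⟩
  · exact card_eq_zero.mpr (filter_eq_empty_iff.mpr fun i _ hi => h ⟨i, hi⟩)

lemma hasAdjRun_snoc_iff (G : SimpleGraph V) {c a : V} {k : ℕ} (w : Fin k → V) :
    HasAdjRun G c (Fin.snoc w a : Fin (k + 1) → V) ↔
      a = c ∧ HasAdjRun G c w ∨ G.Adj a c := by
  simp only [HasAdjRun, Fin.exists_fin_succ', Fin.forall_fin_succ', Fin.snoc_castSucc,
    Fin.snoc_last, Fin.castSucc_lt_castSucc_iff, Fin.castSucc_lt_last,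
    (Fin.castSucc_lt_last _).not_gt, lt_irrefl, imp_true_iff, false_imp_iff, true_and,
    forall_const, and_assoc, and_left_comm (b := a = c), exists_and_left]

lemma hasAdjRun_of_isCopy {G : SimpleGraph V} {x y : V} (hxy : G.Adj x y) {k : ℕ}
    {w w' : Fin k → V} (h : isCopy x y w w') : HasAdjRun G y w ∧ HasAdjRun G x w' := by
  obtain ⟨i, -, hwi, hwi', hsuf⟩ := h
  exact ⟨⟨i, fun j hj => (hsuf j hj).1, hwi ▸ hxy⟩,
    ⟨i, fun j hj => (hsuf j hj).2, hwi' ▸ hxy.symm⟩⟩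

lemma isCopy_snoc_iff {x y a b : V} {k : ℕ} (w w' : Fin k → V) :
    isCopy x y (Fin.snoc w a : Fin (k + 1) → V) (Fin.snoc w' b) ↔
      isCopy x y w w' ∧ a = y ∧ b = x ∨ w = w' ∧ a = x ∧ b = y := by
  simp only [isCopy, Fin.exists_fin_succ', Fin.forall_fin_succ', Fin.snoc_castSucc,
    Fin.snoc_last, Fin.castSucc_lt_castSucc_iff, Fin.castSucc_lt_last,
    (Fin.castSucc_lt_last _).not_gt, lt_irrefl, imp_true_iff, false_imp_iff, and_true,
    forall_const, funext_iff, ← and_assoc, exists_and_right]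

def neighborAt {t : ℕ} (u : Fin t → V) (i : Fin t) (c : V) : Fin t → V :=
  fun j => if j < i then u j else if j = i then c else u i

lemma sierpinskiGraph_adj_iff (G : SimpleGraph V) {t : ℕ} (u v : Fin t → V) :
    (sierpinskiGraph G t).Adj u v ↔
      ∃ i c, ((∀ j, i < j → u j = c) ∧ G.Adj (u i) c) ∧ neighborAt u i c = v := by
  constructor
  · rintro ⟨i, hpre, -, hadj, hsuf⟩
    refine ⟨i, v i, ⟨fun j hj => (hsuf j hj).1, hadj⟩, funext fun j => ?_⟩
    rcases lt_trichotomy j i with h | rfl | h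
    · simp [neighborAt, h, hpre j h]
    · simp [neighborAt]
    · simp [neighborAt, h.not_gt, h.ne', (hsuf j h).2]
  · rintro ⟨i, c, ⟨hsuf, hadj⟩, rfl⟩
    refine ⟨i, fun j hj => by simp [neighborAt, hj], by simpa [neighborAt] using hadj.ne,
      by simpa [neighborAt] using hadj, fun j hj => ?_⟩
    simp [neighborAt, hj.not_gt, hj.ne', hsuf j hj]

lemma neighborAt_injOn {t : ℕ} (u : Fin t → V) :
    Set.InjOn (fun p : Fin t × V => neighborAt u p.1 p.2) {p | u p.1 ≠ p.2} := by
  have not_lt_of_eq :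
      ∀ i i' c c', u i ≠ c → neighborAt u i c = neighborAt u i' c' → ¬i < i' :=
    fun i i' c c' hc heq hlt => hc <| by simpa [neighborAt, hlt] using (congrFun heq i).symm
  rintro ⟨i, c⟩ hc ⟨i', c'⟩ hc' heq
  obtain rfl : i = i' := le_antisymm (not_lt.mp (not_lt_of_eq i' i c' c hc' heq.symm))
    (not_lt.mp (not_lt_of_eq i i' c c' hc heq))
  simpa [neighborAt] using congrFun heq i

lemma card_filter_snoc [Fintype V] {k : ℕ} (R : (Fin (k + 1) → V) → Prop) [DecidablePred R] :
    #{w | R w} = ∑ a, #{u : Fin k → V | R (Fin.snoc u a)} := by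
  simp only [card_filter]
  rw [← (Fin.snocEquiv fun _ => V).sum_comp, Fintype.sum_prod_type]
  rfl

variable [Fintype V] [DecidableEq V] (G : SimpleGraph V) [DecidableRel G.Adj]

lemma degree_eq_card_pivots {t : ℕ} (u : Fin t → V) :
    (sierpinskiGraph G t).degree u =
      #{p : Fin t × V | (∀ j, p.1 < j → u j = p.2) ∧ G.Adj (u p.1) p.2} := by
  have hN : (sierpinskiGraph G t).neighborFinset u =
      (univ.filter fun p : Fin t × V => (∀ j, p.1 < j → u j = p.2) ∧ G.Adj (u p.1) p.2).image
        fun p => neighborAt u p.1 p.2 := by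
    ext v
    simp [sierpinskiGraph_adj_iff]
  rw [← SimpleGraph.card_neighborFinset_eq_degree, hN, card_image_of_injOn]
  exact (neighborAt_injOn u).mono fun p hp => (mem_filter.mp hp).2.2.ne

lemma degree_snoc {k : ℕ} (w : Fin k → V) (a : V) :
    (sierpinskiGraph G (k + 1)).degree (Fin.snoc w a) =
      G.degree a + if HasAdjRun G a w then 1 else 0 := by
  have hpivot : ∀ i : Fin k,
      #{c | ((∀ j, i < j → w j = c) ∧ a = c) ∧ G.Adj (w i) c} =
        if (∀ j, i < j → w j = a) ∧ G.Adj (w i) a then 1 else 0 := by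
    intro i
    rw [card_filter,
      Finset.sum_eq_single a (fun c _ hc => if_neg fun h => hc h.1.2.symm) (by simp)]
    simp
  have hnot_last_lt : ∀ i : Fin k, ¬Fin.last k < i.castSucc :=
    fun i => lt_asymm (Fin.castSucc_lt_last i)
  rw [degree_eq_card_pivots, card_filter, Fintype.sum_prod_type, Fin.sum_univ_castSucc]
  simp only [Fin.snoc_castSucc, Fin.snoc_last, Fin.forall_fin_succ',
    Fin.castSucc_lt_castSucc_iff, Fin.castSucc_lt_last, true_imp_iff, ← card_filter, hpivot,
    hnot_last_lt, lt_irrefl, false_imp_iff, implies_true, true_and, card_filter_adjRun_witness,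
    ← G.neighborFinset_eq_filter, G.card_neighborFinset_eq_degree, add_comm]

lemma card_hasAdjRun (c : V) (k : ℕ) :
    #{w : Fin k → V | HasAdjRun G c w} = G.degree c * psi (Fintype.card V) k := by
  induction k with
  | zero => simp [HasAdjRun, psi]
  | succ k ih =>
    have hfiber : ∀ a, #{u : Fin k → V | a = c ∧ HasAdjRun G c u ∨ G.Adj a c} =
        (if a = c then #{u : Fin k → V | HasAdjRun G c u} else 0) +
          if G.Adj c a then Fintype.card V ^ k else 0 := by
      intro a
      by_cases hac : a = c
      · subst hac; simp
      · by_cases hadj : G.Adj c a <;> simp [hac, hadj, G.adj_comm a c]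
    simp only [card_filter_snoc, hasAdjRun_snoc_iff, hfiber, sum_add_distrib, sum_ite_eq',
      mem_univ, if_true, ih, sum_ite, sum_const_zero, sum_const, smul_eq_mul, add_zero,
      ← G.neighborFinset_eq_filter, G.card_neighborFinset_eq_degree, psi_succ]
    ring

lemma card_hasAdjRun_and_not_hasAdjRun {x y : V} (hxy : G.Adj x y) (m : ℕ) :
    (#{w : Fin (m + 1) → V | HasAdjRun G x w ∧ ¬HasAdjRun G y w} : ℤ) =
      Fintype.card V ^ m * (G.degree x - tau G x y : ℤ) -
        psi (Fintype.card V) m * G.degree y := by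
  have hfiber : ∀ a, #{u : Fin m → V | (a = x ∧ HasAdjRun G x u ∨ G.Adj a x) ∧
        ¬(a = y ∧ HasAdjRun G y u ∨ G.Adj a y)} +
        (if a = y then #{u : Fin m → V | HasAdjRun G y u} else 0) =
      if a ∈ G.neighborFinset x \ G.neighborFinset y then Fintype.card V ^ m else 0 := by
    intro a
    by_cases hay : a = y
    · subst a
      simp [hxy, hxy.symm, add_comm, card_filter_add_card_filter_not]
    by_cases hax : a = x
    · subst hax
      simp [hay, hxy]
    · by_cases h : G.Adj x a ∧ ¬G.Adj y a <;> simp [hax, hay, h, G.adj_comm a]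
  have hcount : #{w : Fin (m + 1) → V | HasAdjRun G x w ∧ ¬HasAdjRun G y w} +
      G.degree y * psi (Fintype.card V) m =
        #(G.neighborFinset x \ G.neighborFinset y) * Fintype.card V ^ m := by
    simpa only [card_filter_snoc, hasAdjRun_snoc_iff, sum_add_distrib, sum_ite_eq', mem_univ,
      if_true, card_hasAdjRun, sum_ite_mem, univ_inter, sum_const, smul_eq_mul]
      using congrArg (fun f : V → ℕ => ∑ a, f a) (funext hfiber)
  have hsplit : #(G.neighborFinset x \ G.neighborFinset y) + tau G x y = G.degree x :=
    G.card_neighborFinset_eq_degree x ▸ card_sdiff_add_card_inter _ _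
  rw [← hsplit]
  push_cast
  zify at hcount
  linear_combination hcount

lemma copyCount_eq_card {x y : V} (hxy : G.Adj x y) (k : ℕ) :
    copyCount G (k + 1) x y (G.degree x + 1) (G.degree y) =
      #{w : Fin k → V | HasAdjRun G x w ∧ ¬HasAdjRun G y w} := by
  have himage : ({p : (Fin (k + 1) → V) × (Fin (k + 1) → V) | isCopy x y p.1 p.2 ∧
      (sierpinskiGraph G (k + 1)).degree p.1 = G.degree x + 1 ∧
        (sierpinskiGraph G (k + 1)).degree p.2 = G.degree y} : Finset _) =
      ({w : Fin k → V | HasAdjRun G x w ∧ ¬HasAdjRun G y w} : Finset _).image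
        fun w => (Fin.snoc w x, Fin.snoc w y) := by
    ext ⟨u, v⟩
    cases u using Fin.snocCases with | snoc w a =>
    cases v using Fin.snocCases with | snoc w' b =>
    simp only [mem_filter, mem_univ, true_and, mem_image, Prod.mk.injEq, isCopy_snoc_iff,
      degree_snoc, Fin.snoc_inj]
    constructor
    · rintro ⟨⟨hcopy, rfl, rfl⟩ | ⟨rfl, rfl, rfl⟩, hdu, hdv⟩
      · obtain ⟨hy, hx⟩ := hasAdjRun_of_isCopy hxy hcopy
        simp only [hy, hx, if_true] at hdu hdv
        omega
      · refine ⟨w, ⟨?_, ?_⟩, ⟨rfl, rfl⟩, rfl, rfl⟩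
        · by_contra h
          simp [h] at hdu
        · intro h
          simp [h] at hdv
    · rintro ⟨w'', ⟨hx, hy⟩, ⟨rfl, rfl⟩, rfl, rfl⟩
      simp [hx, hy]
  rw [copyCount, himage, card_image_of_injective]
  intro w w' h
  simpa [Fin.snoc_inj] using h

end Sierpinski

theorem copyCount_degSucc_deg_general {n : ℕ} (G : SimpleGraph (Fin n))
    [DecidableRel G.Adj] (x y : Fin n) (hxy : G.Adj x y) (t : ℕ) (ht : 2 ≤ t) :
    (copyCount G t x y (G.degree x + 1) (G.degree y) : ℤ) =
      (n : ℤ) ^ (t - 2) * ((G.degree x : ℤ) - tau G x y) - psi n (t - 2) * G.degree y := by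
  obtain ⟨m, rfl⟩ : ∃ m, t = m + 2 := ⟨t - 2, by omega⟩
  rw [Nat.add_sub_cancel, Sierpinski.copyCount_eq_card G hxy,
    Sierpinski.card_hasAdjRun_and_not_hasAdjRun G hxy, Fintype.card_fin]

theorem copyCount_degSucc_deg {n : ℕ} (hn : 2 ≤ n) (G : SimpleGraph (Fin n))
    [DecidableRel G.Adj] (x y : Fin n) (hxy : G.Adj x y) (t : ℕ) (ht : 2 ≤ t) :
    (copyCount G t x y (G.degree x + 1) (G.degree y) : ℤ) =
      (n : ℤ) ^ (t - 2) * ((G.degree x : ℤ) - tau G x y) - psi n (t - 2) * G.degree y :=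
  copyCount_degSucc_deg_general G x y hxy t ht
end

section
/- For any real number α and any integers t, n ≥ 2, the general Randić index of the Sierpiński graph S(K_n,t) built from the complete graph K_n satisfies R_α(S(K_n,t)) = n^{α+1}(n−1)^{α+1} + (n^{2α+t+1} − 2n^{2(α+1)} + n^{2α+1})/2. -/
open Finset

/-!
In `S(K_n, t)` a word `a·u` has the neighbours `a·v` inherited from the copy of `S(K_n, t - 1)`
indexed by `a`, plus exactly one neighbour `b·aa⋯a` outside that copy when `u = bb⋯b` with
`b ≠ a`, and none otherwise. By induction on `t`, the `n` extreme vertices `cc⋯c` have degree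
`n - 1` and all other vertices degree `n`. For `t ≥ 2` the extreme vertices are pairwise
non-adjacent, so `n(n - 1)` edges have weight `(n(n - 1))^α` and the remaining
`(n^{t+1} - n)/2 - n(n - 1)` edges (handshake lemma) have weight `(n²)^α`.
-/

namespace SimpleGraph

variable {V : Type*} [Fintype V] (G : SimpleGraph V) [DecidableRel G.Adj]

lemma randic_eq_sum_edgeFinset {α : ℝ} {f : Sym2 V → ℝ}
    (hf : ∀ u v, G.Adj u v → ((G.degree u : ℝ) * G.degree v) ^ α = f s(u, v)) :
    randic G α = ∑ e ∈ G.edgeFinset, f e := by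
  unfold randic
  refine Finset.sum_congr (by congr!) fun e he ↦ ?_
  induction e using Sym2.ind with
  | _ u v => rw [Sym2.lift_mk, ← hf u v (mem_edgeFinset.mp he)]; congr!

variable [DecidableEq V]

lemma sum_card_filter_mem_edgeFinset (A : Finset V) :
    ∑ e ∈ G.edgeFinset, #{v ∈ A | v ∈ e} = ∑ v ∈ A, G.degree v := by
  simp_rw [card_filter, ← card_incidenceFinset_eq_degree, incidenceFinset_eq_filter, card_filter]
  exact Finset.sum_comm

variable {G} {A : Finset V} {a b : ℕ}

lemma two_mul_card_edgeFinset_of_degree (ha : ∀ v ∈ A, G.degree v = a)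
    (hb : ∀ v ∉ A, G.degree v = b) :
    2 * #G.edgeFinset = a * #A + b * (Fintype.card V - #A) := by
  rw [← sum_degrees_eq_twice_card_edges, ← Finset.sum_add_sum_compl A,
    Finset.sum_congr rfl ha, Finset.sum_congr rfl (fun v hv ↦ hb v (Finset.mem_compl.mp hv)),
    sum_const, sum_const, card_compl, smul_eq_mul, smul_eq_mul, mul_comm, mul_comm b]

-- An edge has at most one endpoint in the independent set `A`, so its weight is `(ab)^α` or
-- `(b²)^α` according as it meets `A` or not.
lemma rpow_degree_mul_degree_of_isIndepSet (hA : G.IsIndepSet A)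
    (ha : ∀ v ∈ A, G.degree v = a) (hb : ∀ v ∉ A, G.degree v = b) (α : ℝ) {u v : V}
    (huv : G.Adj u v) :
    ((G.degree u : ℝ) * G.degree v) ^ α =
      ((b : ℝ) * b) ^ α +
        #{w ∈ A | w ∈ s(u, v)} * (((a : ℝ) * b) ^ α - ((b : ℝ) * b) ^ α) := by
  by_cases hu : u ∈ A <;> by_cases hv : v ∈ A
  · exact absurd huv (hA hu hv huv.ne)
  · have huA : {w ∈ A | w ∈ s(u, v)} = {u} := by
      ext w; simp only [mem_filter, Sym2.mem_iff, mem_singleton]; grind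
    rw [huA, card_singleton, ha u hu, hb v hv]; ring
  · have hvA : {w ∈ A | w ∈ s(u, v)} = {v} := by
      ext w; simp only [mem_filter, Sym2.mem_iff, mem_singleton]; grind
    rw [hvA, card_singleton, hb u hu, ha v hv, mul_comm (b : ℝ) a]; ring
  · have hnone : {w ∈ A | w ∈ s(u, v)} = ∅ := by
      ext w; simp only [mem_filter, Sym2.mem_iff, notMem_empty]; grind
    rw [hnone, card_empty, hb u hu, hb v hv]; ring

lemma randic_eq_of_isIndepSet (hA : G.IsIndepSet A) (ha : ∀ v ∈ A, G.degree v = a)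
    (hb : ∀ v ∉ A, G.degree v = b) (α : ℝ) :
    randic G α = a * #A * ((a : ℝ) * b) ^ α +
      (b * ((Fintype.card V : ℝ) - #A) - a * #A) / 2 * ((b : ℝ) * b) ^ α := by
  have hE := congrArg (Nat.cast : ℕ → ℝ) (two_mul_card_edgeFinset_of_degree ha hb)
  push_cast [Nat.cast_sub (card_le_univ A)] at hE
  rw [randic_eq_sum_edgeFinset G (f := fun e ↦
      ((b : ℝ) * b) ^ α + #{w ∈ A | w ∈ e} * (((a : ℝ) * b) ^ α - ((b : ℝ) * b) ^ α))
      fun _ _ ↦ rpow_degree_mul_degree_of_isIndepSet hA ha hb α,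
    sum_add_distrib, sum_const, ← sum_mul, ← Nat.cast_sum, sum_card_filter_mem_edgeFinset,
    sum_congr rfl ha, sum_const, nsmul_eq_mul, smul_eq_mul]
  push_cast
  linear_combination (((b : ℝ) * b) ^ α / 2) * hE

end SimpleGraph

section Sierpinski

open Function

def extremeVertices (V : Type*) [Fintype V] [DecidableEq V] (t : ℕ) : Finset (Fin t → V) :=
  univ.image (const (Fin t))

variable {V : Type*}

lemma Fin.cons_eq_const_iff {t : ℕ} {a c : V} {u : Fin t → V} :
    (Fin.cons a u : Fin (t + 1) → V) = const _ c ↔ a = c ∧ u = const _ c := by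
  rw [← Fin.cons_self_tail (const (Fin (t + 1)) c), Fin.cons_inj]
  rfl

variable {G : SimpleGraph V} {t : ℕ}

lemma sierpinskiGraph_cons_adj_cons_iff {a b : V} {u v : Fin t → V} :
    (sierpinskiGraph G (t + 1)).Adj (Fin.cons a u) (Fin.cons b v) ↔
      a = b ∧ (sierpinskiGraph G t).Adj u v ∨
        G.Adj a b ∧ u = const _ b ∧ v = const _ a := by
  constructor
  · rintro ⟨i, hlt, hne, hadj, hgt⟩
    induction i using Fin.cases with
    | zero =>
      simp only [Fin.cons_zero] at hadj
      exact Or.inr ⟨hadj, funext fun k ↦ by simpa using (hgt k.succ k.succ_pos).1,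
        funext fun k ↦ by simpa using (hgt k.succ k.succ_pos).2⟩
    | succ i =>
      refine Or.inl ⟨by simpa using hlt 0 i.succ_pos, i,
        fun j hj ↦ by simpa using hlt j.succ (Fin.succ_lt_succ_iff.mpr hj),
        by simpa using hne, by simpa using hadj,
        fun j hj ↦ by simpa using hgt j.succ (Fin.succ_lt_succ_iff.mpr hj)⟩
  · rintro (⟨rfl, i, hlt, hne, hadj, hgt⟩ | ⟨hadj, rfl, rfl⟩)
    · refine ⟨i.succ, fun j hj ↦ ?_, by simpa using hne, by simpa using hadj,
        fun j hj ↦ ?_⟩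
      · induction j using Fin.cases with
        | zero => rfl
        | succ j => simpa using hlt j (Fin.succ_lt_succ_iff.mp hj)
      · induction j using Fin.cases with
        | zero => exact absurd hj (Fin.not_lt_zero _)
        | succ j => simpa using hgt j (Fin.succ_lt_succ_iff.mp hj)
    · refine ⟨0, fun j hj ↦ absurd hj (Fin.not_lt_zero j), by simpa using hadj.ne,
        by simpa using hadj, fun j hj ↦ ?_⟩
      induction j using Fin.cases with
      | zero => exact absurd hj (lt_irrefl _)
      | succ j => simp

variable [Fintype V] [DecidableEq V]

lemma card_extremeVertices [NeZero t] : #(extremeVertices V t) = Fintype.card V := by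
  rw [extremeVertices, card_image_of_injective _ const_injective, card_univ]

lemma isIndepSet_extremeVertices (ht : 2 ≤ t) :
    (sierpinskiGraph G t).IsIndepSet (extremeVertices V t) := by
  have : Nontrivial (Fin t) := Fin.nontrivial_iff_two_le.mpr ht
  simp only [extremeVertices, coe_image, coe_univ, Set.image_univ]
  rintro _ ⟨a, rfl⟩ _ ⟨b, rfl⟩ - ⟨i, hlt, hne, -, hgt⟩
  obtain ⟨j, hj⟩ := exists_ne i
  rcases hj.lt_or_gt with hji | hij
  · exact hne (hlt j hji)
  · exact hne (hgt j hij).1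

lemma cons_mem_extremeVertices_iff {a : V} {u : Fin t → V} :
    Fin.cons a u ∈ extremeVertices V (t + 1) ↔ u = const _ a := by
  simp only [extremeVertices, mem_image, mem_univ, true_and, eq_comm (a := const _ _),
    Fin.cons_eq_const_iff]
  exact ⟨fun ⟨_, rfl, hu⟩ ↦ hu, fun hu ↦ ⟨a, rfl, hu⟩⟩

variable [DecidableRel G.Adj]

lemma neighborFinset_sierpinskiGraph_cons (a : V) (u : Fin t → V) :
    (sierpinskiGraph G (t + 1)).neighborFinset (Fin.cons a u) =
      ((sierpinskiGraph G t).neighborFinset u).map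
          ⟨Fin.cons a, Fin.cons_right_injective (α := fun _ ↦ V) a⟩ ∪
        ({b | G.Adj a b ∧ u = const _ b} : Finset V).map
          ⟨fun b ↦ Fin.cons b (const _ a),
            Fin.cons_left_injective (α := fun _ ↦ V) _⟩ := by
  ext w
  induction w using Fin.consCases with
  | cons b v =>
    simp only [SimpleGraph.mem_neighborFinset, sierpinskiGraph_cons_adj_cons_iff, mem_union,
      mem_map, Embedding.coeFn_mk, Fin.cons_inj, mem_filter, mem_univ, true_and]
    grind

lemma degree_sierpinskiGraph_cons (a : V) (u : Fin t → V) :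
    (sierpinskiGraph G (t + 1)).degree (Fin.cons a u) =
      (sierpinskiGraph G t).degree u + #{b | G.Adj a b ∧ u = const _ b} := by
  rw [← SimpleGraph.card_neighborFinset_eq_degree, neighborFinset_sierpinskiGraph_cons,
    card_union_of_disjoint, card_map, card_map, SimpleGraph.card_neighborFinset_eq_degree]
  simp only [disjoint_left, mem_map, mem_filter, mem_univ, true_and, Embedding.coeFn_mk]
  rintro _ ⟨w, -, rfl⟩ ⟨b, hb, hw⟩
  exact hb.1.ne (Fin.cons_inj.mp hw).1.symm

lemma degree_sierpinskiGraph_zero (u : Fin 0 → V) : (sierpinskiGraph G 0).degree u = 0 := by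
  rw [← SimpleGraph.card_neighborFinset_eq_degree, card_eq_zero, eq_empty_iff_forall_notMem]
  rintro v hv
  obtain ⟨i, -⟩ := (SimpleGraph.mem_neighborFinset _ _ _).mp hv
  exact i.elim0

lemma degree_sierpinskiGraph_top (w : Fin (t + 1) → V) :
    (sierpinskiGraph ⊤ (t + 1)).degree w =
      if w ∈ extremeVertices V (t + 1) then Fintype.card V - 1 else Fintype.card V := by
  induction t with
  | zero =>
    induction w using Fin.consCases with
    | cons a u =>
      have hu (b : V) : u = const _ b := Subsingleton.elim _ _
      rw [degree_sierpinskiGraph_cons, degree_sierpinskiGraph_zero,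
        if_pos (cons_mem_extremeVertices_iff.mpr (hu a)),
        filter_congr fun b _ ↦ by rw [SimpleGraph.top_adj, and_iff_left (hu b)], filter_ne,
        card_erase_of_mem (mem_univ a), card_univ, zero_add]
  | succ t ih =>
    induction w using Fin.consCases with
    | cons a u =>
      have hV : 0 < Fintype.card V := Fintype.card_pos_iff.mpr ⟨a⟩
      rw [degree_sierpinskiGraph_cons, ih]
      simp only [cons_mem_extremeVertices_iff]
      by_cases hu : u ∈ extremeVertices V (t + 1)
      · obtain ⟨c, -, rfl⟩ := mem_image.mp hu
        simp only [SimpleGraph.top_adj, if_pos hu, (const_injective (α := Fin (t + 1))).eq_iff]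
        by_cases hac : a = c
        · subst hac; simp
        · have hc : ({x | a ≠ x ∧ c = x} : Finset V) = {c} := by ext; grind
          rw [hc, card_singleton, if_neg (Ne.symm hac)]
          omega
      · have hu' (b : V) : u ≠ const _ b := fun hb ↦
          hu (mem_image.mpr ⟨b, mem_univ _, hb.symm⟩)
        simp [hu', hu]

end Sierpinski

lemma Real.rpow_two_mul_add_natCast {x : ℝ} (hx : 0 < x) (α : ℝ) (k : ℕ) :
    x ^ (2 * α + k) = x ^ α * x ^ α * x ^ k := by
  rw [Real.rpow_add hx, two_mul, Real.rpow_add hx, Real.rpow_natCast]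

theorem randic_sierpinski_complete {n t : ℕ} (hn : 2 ≤ n) (ht : 2 ≤ t) (α : ℝ) :
    randic (sierpinskiGraph (⊤ : SimpleGraph (Fin n)) t) α =
      (n : ℝ) ^ (α + 1) * ((n : ℝ) - 1) ^ (α + 1) +
        ((n : ℝ) ^ (2 * α + (t : ℝ) + 1) - 2 * (n : ℝ) ^ (2 * (α + 1)) +
          (n : ℝ) ^ (2 * α + 1)) / 2 := by
  obtain ⟨s, rfl⟩ : ∃ s, t = s + 1 := ⟨t - 1, by omega⟩
  have hdeg := degree_sierpinskiGraph_top (V := Fin n) (t := s)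
  rw [SimpleGraph.randic_eq_of_isIndepSet (isIndepSet_extremeVertices ht) (a := n - 1) (b := n)
      (fun w hw ↦ by rw [hdeg, if_pos hw, Fintype.card_fin])
      (fun w hw ↦ by rw [hdeg, if_neg hw, Fintype.card_fin]),
    card_extremeVertices, Fintype.card_fun, Fintype.card_fin, Fintype.card_fin,
    Nat.cast_sub (by omega : 1 ≤ n), Nat.cast_one]
  have hn0 : (0 : ℝ) < n := by positivity
  have hn1 : (0 : ℝ) < n - 1 := sub_pos.mpr (Nat.one_lt_cast.mpr hn)
  have hexp₁ : 2 * α + ((s + 1 : ℕ) : ℝ) + 1 = 2 * α + ((s + 2 : ℕ) : ℝ) := by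
    push_cast; ring
  have hexp₂ : 2 * (α + 1) = 2 * α + ((2 : ℕ) : ℝ) := by push_cast; ring
  have hexp₃ : 2 * α + 1 = 2 * α + ((1 : ℕ) : ℝ) := by push_cast; ring
  rw [hexp₁, hexp₂, hexp₃, Real.rpow_two_mul_add_natCast hn0,
    Real.rpow_two_mul_add_natCast hn0, Real.rpow_two_mul_add_natCast hn0,
    Real.mul_rpow hn1.le hn0.le, Real.mul_rpow hn0.le hn0.le,
    Real.rpow_add_one hn0.ne', Real.rpow_add_one hn1.ne']
  push_cast
  ring
end

section
/- For any real number α and any integers t ≥ 2 and n ≥ 3, the general Randić index of the Sierpiński graph S(P_n,t) built from the path P_n on n vertices satisfies R_α(S(P_n,t)) = 2^α n^{t−2}(n−3)(2^α n − 2^{α+2} + 2) + 3^α[2^{α+2}(n−3)(n^{t−2} − ψ(t−2)) + 4n^{t−2} − 2ψ(t−2)] + 2^{2α+1}(n^{t−2} − 2ψ(t−2)) + 3^α[3^α(n−3)(n^{t−2} + 5ψ(t−2)) + 2^{α+1}(n^{t−2} + 4ψ(t−2))]. -/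
open Finset

/-!
Write a word of `S(G, m + 1)` as `w a`, with last letter `a`. Its neighbours are the words `w c`
with `c ~ a`, and at most one word joined to it by a bridge edge (an edge at an earlier level); that
neighbour exists exactly when `w = p c a^j` with `c ~ a`, and is then `p a c^(j+1)`. Hence
`deg (w a) = deg a + ε(w, a)` with `ε(w, a) ∈ {0, 1}`, and both ends of a bridge edge have `ε = 1`.
Grouping the darts of `S(G, m + 2)` by the dart `(a, c)` of `G` formed by their last letters
reduces the Randić sum to counting words of length `m + 1`: there are `ψ(m + 1)` words `p c a^j`
for fixed `c ≠ a`, hence `deg a · ψ(m + 1)` words with `ε(w, a) = 1`; and when `G` is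
triangle-free and `a ~ c`, there are `(deg a + deg c) · ψ(m)` words with `ε(w, a) = ε(w, c) = 1`,
because their last letter must be `a` or `c`. The path `P_n` is triangle-free with degrees
`1, 2, …, 2, 1`, which gives the closed form.
-/

theorem Fintype.sum_fun_fin_succ {V M : Type*} [Fintype V] [AddCommMonoid M] {m : ℕ}
    (g : (Fin (m + 1) → V) → M) : ∑ x, g x = ∑ a, ∑ w, g (Fin.snoc w a) := by
  rw [← (Fin.snocEquiv fun _ ↦ V).sum_comp, Fintype.sum_prod_type]
  rfl

theorem Finset.card_filter_eq_ite {ι : Type*} [Fintype ι] {p : ι → Prop} [DecidablePred p]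
    {q : Prop} [Decidable q] (hq : q ↔ ∃ x, p x) (hp : ∀ x y, p x → p y → x = y) :
    #{x | p x} = if q then 1 else 0 := by
  split_ifs with h
  · obtain ⟨x, hx⟩ := hq.1 h
    exact card_eq_one.2 ⟨x, eq_singleton_iff_unique_mem.2
      ⟨mem_filter.2 ⟨mem_univ x, hx⟩, fun y hy ↦ hp y x (mem_filter.1 hy).2 hx⟩⟩
  · exact card_eq_zero.2 (filter_eq_empty_iff.2 fun x _ hx ↦ h (hq.2 ⟨x, hx⟩))

theorem Fintype.sum_boole_boole {ι R : Type*} [Fintype ι] [CommRing R] (p q : ι → Prop)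
    [DecidablePred p] [DecidablePred q] (g : ℕ → ℕ → R) :
    ∑ i, g (if p i then 1 else 0) (if q i then 1 else 0) =
      card ι * g 0 0 + #{i | p i} * (g 1 0 - g 0 0) + #{i | q i} * (g 0 1 - g 0 0) +
        #{i | p i ∧ q i} * (g 1 1 - g 1 0 - g 0 1 + g 0 0) := by
  have hpoint : ∀ i, g (if p i then 1 else 0) (if q i then 1 else 0) =
      g 0 0 + (if p i then 1 else 0) * (g 1 0 - g 0 0) + (if q i then 1 else 0) * (g 0 1 - g 0 0)
        + (if p i ∧ q i then 1 else 0) * (g 1 1 - g 1 0 - g 0 1 + g 0 0) := by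
    intro i
    by_cases hp : p i <;> by_cases hq : q i <;>
      simp only [hp, hq, and_self, and_false, false_and, if_true, if_false] <;> ring
  simp only [hpoint, sum_add_distrib, ← sum_mul, sum_boole, sum_const, card_univ, nsmul_eq_mul]

namespace SimpleGraph

section

variable {V : Type*} [Fintype V] (G : SimpleGraph V) [DecidableRel G.Adj]

theorem sum_dart_eq_sum_sum_adj {M : Type*} [AddCommMonoid M] (f : V → V → M) :
    ∑ d : G.Dart, f d.fst d.snd = ∑ u, ∑ v, if G.Adj u v then f u v else 0 := by
  have hdarts : (univ : Finset G.Dart).map ⟨Dart.toProd, Dart.toProd_injective⟩ =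
      univ.filter fun p : V × V ↦ G.Adj p.1 p.2 := by
    ext p
    simp only [mem_map, mem_univ, true_and, mem_filter]
    exact ⟨fun ⟨d, hd⟩ ↦ hd ▸ d.adj, fun h ↦ ⟨⟨p, h⟩, rfl⟩⟩
  rw [← Fintype.sum_prod_type' (f := fun u v ↦ if G.Adj u v then f u v else 0),
    ← sum_filter, ← hdarts, sum_map]
  rfl

theorem two_mul_sum_edgeFinset_lift {R : Type*} [NonAssocSemiring R]
    (f : {f : V → V → R // ∀ u v, f u v = f v u}) :
    2 * ∑ e ∈ G.edgeFinset, Sym2.lift f e = ∑ u, ∑ v, if G.Adj u v then f.1 u v else 0 := by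
  classical
  rw [← sum_dart_eq_sum_sum_adj, mul_sum,
    ← sum_fiberwise_of_maps_to (g := Dart.edge) fun d _ ↦ mem_edgeFinset.2 d.edge_mem]
  refine sum_congr rfl fun e he ↦ ?_
  have hfiber : ∀ d ∈ ({d | d.edge = e} : Finset G.Dart), f.1 d.fst d.snd = Sym2.lift f e :=
    fun d hd ↦ by rw [← (mem_filter.1 hd).2]; rfl
  rw [sum_congr rfl hfiber, sum_const, dart_edge_fiber_card _ _ (mem_edgeFinset.1 he),
    nsmul_eq_mul, Nat.cast_two]

theorem two_mul_randic (α : ℝ) :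
    2 * randic G α = ∑ u, ∑ v,
      if G.Adj u v then ((G.degree u : ℝ) * G.degree v) ^ α else 0 := by
  rw [← two_mul_sum_edgeFinset_lift G
    ⟨fun u v ↦ ((G.degree u : ℝ) * G.degree v) ^ α, fun u v ↦ by simp only [mul_comm]⟩]
  unfold randic
  congr!

end

end SimpleGraph

namespace Sierpinski

variable {V : Type*} {m : ℕ}

/-- `w = p c a^j` for some word `p` and some `j ≥ 0`. -/
def EndsWithRun (w : Fin m → V) (c a : V) : Prop :=
  ∃ k, w k = c ∧ ∀ j, k < j → w j = a

/-- The words `w a` and `w' c` are joined by an edge of `S(G, m + 1)` at a level other than the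
last one: `w = p c a^j` and `w' = p a c^j`. -/
def BridgeAdj (w w' : Fin m → V) (a c : V) : Prop :=
  ∃ k, (∀ j, j < k → w j = w' j) ∧ w k = c ∧ w' k = a ∧ ∀ j, k < j → w j = a ∧ w' j = c

def HasBridge (G : SimpleGraph V) (w : Fin m → V) (a : V) : Prop :=
  ∃ c, G.Adj a c ∧ EndsWithRun w c a

instance [DecidableEq V] (w : Fin m → V) (c a : V) : Decidable (EndsWithRun w c a) := by
  unfold EndsWithRun; infer_instance

instance [DecidableEq V] (w w' : Fin m → V) (a c : V) : Decidable (BridgeAdj w w' a c) := by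
  unfold BridgeAdj; infer_instance

instance [Fintype V] [DecidableEq V] (G : SimpleGraph V) [DecidableRel G.Adj] (w : Fin m → V)
    (a : V) : Decidable (HasBridge G w a) := by
  unfold HasBridge; infer_instance

section

variable {G : SimpleGraph V} {w w' w'' : Fin m → V} {a c c' : V}

theorem eq_of_run {k k' : Fin m} (hk : w k ≠ a) (hk' : w k' ≠ a)
    (hrun : ∀ j, k < j → w j = a) (hrun' : ∀ j, k' < j → w j = a) : k = k' := by
  rcases lt_trichotomy k k' with hlt | heq | hlt
  exacts [absurd (hrun k' hlt) hk', heq, absurd (hrun' k hlt) hk]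

theorem EndsWithRun.unique (hc : c ≠ a) (hc' : c' ≠ a) :
    EndsWithRun w c a → EndsWithRun w c' a → c = c' := by
  rintro ⟨k, rfl, hrun⟩ ⟨k', rfl, hrun'⟩
  rw [eq_of_run hc hc' hrun hrun']

theorem endsWithRun_snoc_iff {z : V} :
    EndsWithRun (Fin.snoc w z : Fin (m + 1) → V) c a ↔ z = c ∨ z = a ∧ EndsWithRun w c a := by
  constructor
  · rintro ⟨k, hk, hrun⟩
    induction k using Fin.lastCases with
    | last => exact Or.inl (by simpa using hk)
    | cast k =>
      refine Or.inr ⟨by simpa using hrun _ (Fin.castSucc_lt_last k), k, by simpa using hk,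
        fun j hj ↦ by simpa using hrun _ (Fin.castSucc_lt_castSucc_iff.2 hj)⟩
  · rintro (rfl | ⟨rfl, k, hk, hrun⟩)
    · exact ⟨Fin.last m, by simp, fun j hj ↦ absurd hj (not_lt_of_ge (Fin.le_last j))⟩
    · refine ⟨k.castSucc, by simpa using hk, fun j hj ↦ ?_⟩
      induction j using Fin.lastCases with
      | last => simp
      | cast j => simpa using hrun j (Fin.castSucc_lt_castSucc_iff.1 hj)

theorem hasBridge_snoc_iff {z : V} :
    HasBridge G (Fin.snoc w z : Fin (m + 1) → V) a ↔ G.Adj a z ∨ z = a ∧ HasBridge G w a := by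
  simp only [HasBridge, endsWithRun_snoc_iff]
  constructor
  · rintro ⟨c, hac, rfl | ⟨rfl, h⟩⟩
    exacts [Or.inl hac, Or.inr ⟨rfl, c, hac, h⟩]
  · rintro (haz | ⟨rfl, c, hac, h⟩)
    exacts [⟨z, haz, Or.inl rfl⟩, ⟨c, hac, Or.inr ⟨rfl, h⟩⟩]

theorem BridgeAdj.endsWithRun_left : BridgeAdj w w' a c → EndsWithRun w c a :=
  fun ⟨k, _, hk, _, hrun⟩ ↦ ⟨k, hk, fun j hj ↦ (hrun j hj).1⟩

theorem BridgeAdj.endsWithRun_right : BridgeAdj w w' a c → EndsWithRun w' a c :=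
  fun ⟨k, _, _, hk, hrun⟩ ↦ ⟨k, hk, fun j hj ↦ (hrun j hj).2⟩

theorem BridgeAdj.ne (hac : a ≠ c) : BridgeAdj w w' a c → w ≠ w' :=
  fun ⟨k, _, hk, hk', _⟩ h ↦ hac (hk'.symm.trans ((congrFun h k).symm.trans hk))

theorem BridgeAdj.unique (hac : a ≠ c) :
    BridgeAdj w w' a c → BridgeAdj w w'' a c → w' = w'' := by
  rintro ⟨k, hpre, hk, hk', hrun⟩ ⟨l, hpre', hl, hl', hrun'⟩
  obtain rfl : k = l := eq_of_run (hk ▸ hac.symm) (hl ▸ hac.symm) (fun j hj ↦ (hrun j hj).1)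
    (fun j hj ↦ (hrun' j hj).1)
  funext j
  rcases lt_trichotomy j k with hj | rfl | hj
  · rw [← hpre j hj, hpre' j hj]
  · rw [hk', hl']
  · rw [(hrun j hj).2, (hrun' j hj).2]

theorem EndsWithRun.exists_bridgeAdj [DecidableEq V] :
    EndsWithRun w c a → ∃ w', BridgeAdj w w' a c := by
  rintro ⟨k, hk, hrun⟩
  refine ⟨fun j ↦ if j < k then w j else if j = k then a else c, k, fun j hj ↦ by simp [hj],
    hk, by simp, fun j hj ↦ ⟨hrun j hj, by simp [lt_asymm hj, hj.ne']⟩⟩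

end

section

open SimpleGraph

variable [Fintype V] [DecidableEq V] (G : SimpleGraph V) [DecidableRel G.Adj] {a b c : V}

theorem card_bridgeAdj (hac : a ≠ c) (w : Fin m → V) :
    #{w' | BridgeAdj w w' a c} = if EndsWithRun w c a then 1 else 0 :=
  card_filter_eq_ite ⟨EndsWithRun.exists_bridgeAdj, fun ⟨_, h⟩ ↦ h.endsWithRun_left⟩
    fun _ _ ↦ BridgeAdj.unique hac

theorem card_adj_endsWithRun (w : Fin m → V) :
    #{c | G.Adj a c ∧ EndsWithRun w c a} = if HasBridge G w a then 1 else 0 :=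
  card_filter_eq_ite Iff.rfl fun _ _ hc hc' ↦ EndsWithRun.unique hc.1.ne' hc'.1.ne' hc.2 hc'.2

theorem card_endsWithRun (hca : c ≠ a) :
    ∀ m, #{w : Fin m → V | EndsWithRun w c a} = psi (Fintype.card V) m
  | 0 => by simp [EndsWithRun, psi]
  | m + 1 => by
    have hsnoc : ∀ z, #{w : Fin m → V | EndsWithRun (Fin.snoc w z : Fin (m + 1) → V) c a} =
        (if z = c then Fintype.card V ^ m else 0) +
          if z = a then #{w : Fin m → V | EndsWithRun w c a} else 0 := by
      intro z
      by_cases hzc : z = c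
      · subst hzc; simp [endsWithRun_snoc_iff, hca]
      · by_cases hza : z = a
        · subst hza; simp [endsWithRun_snoc_iff, hzc]
        · simp [endsWithRun_snoc_iff, hzc, hza]
    rw [card_filter, Fintype.sum_fun_fin_succ]
    simp only [← card_filter, hsnoc, sum_add_distrib, sum_ite_eq', mem_univ, if_true,
      card_endsWithRun hca m, psi, sum_range_succ]
    ring

theorem card_hasBridge :
    #{w : Fin m → V | HasBridge G w a} = G.degree a * psi (Fintype.card V) m := by
  calc #{w : Fin m → V | HasBridge G w a}
      = ∑ w : Fin m → V, #{c | G.Adj a c ∧ EndsWithRun w c a} := by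
        rw [card_filter]
        exact sum_congr rfl fun w _ ↦ (card_adj_endsWithRun G w).symm
    _ = ∑ c ∈ G.neighborFinset a, #{w : Fin m → V | EndsWithRun w c a} := by
        simp only [card_filter, neighborFinset_eq_filter, sum_filter]
        rw [sum_comm]
        refine sum_congr rfl fun c _ ↦ ?_
        by_cases hac : G.Adj a c <;> simp [hac]
    _ = G.degree a * psi (Fintype.card V) m := by
        rw [sum_congr rfl fun c hc ↦ card_endsWithRun ((mem_neighborFinset G a c).1 hc).ne' m,
          sum_const, card_neighborFinset_eq_degree, smul_eq_mul]

theorem card_hasBridge_and_hasBridge (hG : G.CliqueFree 3) (hab : G.Adj a b) :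
    #{w : Fin (m + 1) → V | HasBridge G w a ∧ HasBridge G w b} =
      (G.degree a + G.degree b) * psi (Fintype.card V) m := by
  have hsnoc : ∀ z, #{w : Fin m → V | HasBridge G (Fin.snoc w z : Fin (m + 1) → V) a ∧
      HasBridge G (Fin.snoc w z : Fin (m + 1) → V) b} =
        (if z = a then #{w : Fin m → V | HasBridge G w a} else 0) +
          if z = b then #{w : Fin m → V | HasBridge G w b} else 0 := by
    intro z
    by_cases hza : z = a
    · subst hza
      simp [hasBridge_snoc_iff, hab.symm, hab.ne]
    by_cases hzb : z = b
    · subst hzb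
      simp [hasBridge_snoc_iff, hab, hza]
    have hnot : ¬(G.Adj a z ∧ G.Adj b z) := fun ⟨haz, hbz⟩ ↦
      hG {a, b, z} (is3Clique_triple_iff.2 ⟨hab, haz, hbz⟩)
    rw [if_neg hza, if_neg hzb, add_zero, card_eq_zero, filter_eq_empty_iff]
    intro w _ h
    simp only [hasBridge_snoc_iff, hza, hzb, false_and, or_false] at h
    exact hnot h
  rw [card_filter, Fintype.sum_fun_fin_succ]
  simp only [← card_filter, hsnoc, sum_add_distrib, sum_ite_eq', mem_univ, if_true,
    card_hasBridge]
  ring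

end

end Sierpinski

open Sierpinski

theorem sierpinskiGraph_adj_snoc {V : Type*} {G : SimpleGraph V} {m : ℕ} {w w' : Fin m → V}
    {a c : V} :
    (sierpinskiGraph G (m + 1)).Adj (Fin.snoc w a) (Fin.snoc w' c) ↔
      G.Adj a c ∧ (w = w' ∨ BridgeAdj w w' a c) := by
  constructor
  · rintro ⟨i, hpre, -, hadj, hsuf⟩
    induction i using Fin.lastCases with
    | last =>
      simp only [Fin.snoc_last] at hadj
      refine ⟨hadj, Or.inl (funext fun j ↦ ?_)⟩
      simpa using hpre j.castSucc (Fin.castSucc_lt_last j)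
    | cast k =>
      simp only [Fin.snoc_castSucc] at hadj
      obtain ⟨hwk, hw'k⟩ := hsuf (Fin.last m) (Fin.castSucc_lt_last k)
      simp only [Fin.snoc_last, Fin.snoc_castSucc] at hwk hw'k
      subst hwk hw'k
      refine ⟨hadj.symm, Or.inr ⟨k, fun j hj ↦ ?_, rfl, rfl, fun j hj ↦ ?_⟩⟩
      · simpa using hpre j.castSucc (Fin.castSucc_lt_castSucc_iff.2 hj)
      · simpa using hsuf j.castSucc (Fin.castSucc_lt_castSucc_iff.2 hj)
  · rintro ⟨hadj, rfl | ⟨k, hpre, hwk, hw'k, hsuf⟩⟩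
    · refine ⟨Fin.last m, fun j hj ↦ ?_, by simpa using hadj.ne, by simpa using hadj,
        fun j hj ↦ absurd hj (not_lt_of_ge (Fin.le_last j))⟩
      obtain ⟨j, rfl⟩ := Fin.exists_castSucc_eq.2 hj.ne
      simp
    · refine ⟨k.castSucc, fun j hj ↦ ?_, by simpa [hwk, hw'k] using hadj.ne',
        by simpa [hwk, hw'k] using hadj.symm, fun j hj ↦ ?_⟩
      · obtain ⟨j, rfl⟩ := Fin.exists_castSucc_eq.2 (hj.trans (Fin.castSucc_lt_last k)).ne
        simpa using hpre j (Fin.castSucc_lt_castSucc_iff.1 hj)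
      · induction j using Fin.lastCases with
        | last => simp [hwk, hw'k]
        | cast j => simpa [hwk, hw'k] using hsuf j (Fin.castSucc_lt_castSucc_iff.1 hj)

section

open SimpleGraph

variable {V : Type*} [Fintype V] [DecidableEq V] (G : SimpleGraph V) [DecidableRel G.Adj]
  {m : ℕ}

theorem sum_adj_sierpinskiGraph_snoc {M : Type*} [AddCommMonoid M] (w : Fin m → V) (a : V)
    (g : (Fin (m + 1) → V) → M) :
    ∑ y, (if (sierpinskiGraph G (m + 1)).Adj (Fin.snoc w a) y then g y else 0) =
      ∑ c, if G.Adj a c then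
        g (Fin.snoc w c) + ∑ w', (if BridgeAdj w w' a c then g (Fin.snoc w' c) else 0) else 0 := by
  rw [Fintype.sum_fun_fin_succ]
  refine sum_congr rfl fun c _ ↦ ?_
  simp only [sierpinskiGraph_adj_snoc]
  by_cases hac : G.Adj a c
  · have hsplit : ∀ w', (if G.Adj a c ∧ (w = w' ∨ BridgeAdj w w' a c) then g (Fin.snoc w' c)
        else 0) = (if w = w' then g (Fin.snoc w' c) else 0) +
          (if BridgeAdj w w' a c then g (Fin.snoc w' c) else 0) := by
      intro w'
      by_cases hw : w = w'
      · subst hw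
        have hnot : ¬BridgeAdj w w a c := fun h ↦ h.ne hac.ne rfl
        simp [hac, hnot]
      · simp [hac, hw]
    rw [sum_congr rfl fun w' _ ↦ hsplit w', sum_add_distrib, sum_ite_eq, if_pos (mem_univ _),
      if_pos hac]
  · simp [hac]

theorem degree_sierpinskiGraph_snoc (w : Fin m → V) (a : V) :
    (sierpinskiGraph G (m + 1)).degree (Fin.snoc w a) =
      G.degree a + if HasBridge G w a then 1 else 0 := by
  have hsplit : ∀ c, (if G.Adj a c then 1 + ∑ w', (if BridgeAdj w w' a c then 1 else 0) else 0) =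
      (if G.Adj a c then 1 else 0) + if G.Adj a c ∧ EndsWithRun w c a then 1 else 0 := by
    intro c
    by_cases hac : G.Adj a c
    · simp [hac, card_bridgeAdj hac.ne]
    · simp [hac]
  rw [← card_neighborFinset_eq_degree, neighborFinset_eq_filter, card_filter,
    sum_adj_sierpinskiGraph_snoc, sum_congr rfl fun c _ ↦ hsplit c, sum_add_distrib,
    ← card_filter, ← card_filter, card_adj_endsWithRun, ← neighborFinset_eq_filter,
    card_neighborFinset_eq_degree]

theorem sum_adj_sierpinskiGraph_snoc_degree {M : Type*} [AddCommMonoid M] (F : ℕ → ℕ → M)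
    (w : Fin m → V) (a : V) :
    ∑ y, (if (sierpinskiGraph G (m + 1)).Adj (Fin.snoc w a) y then
      F ((sierpinskiGraph G (m + 1)).degree (Fin.snoc w a))
        ((sierpinskiGraph G (m + 1)).degree y) else 0) =
      ∑ c, if G.Adj a c then
        F (G.degree a + if HasBridge G w a then 1 else 0)
          (G.degree c + if HasBridge G w c then 1 else 0) +
        if EndsWithRun w c a then F (G.degree a + 1) (G.degree c + 1) else 0 else 0 := by
  rw [sum_adj_sierpinskiGraph_snoc]
  refine sum_congr rfl fun c _ ↦ ?_
  by_cases hac : G.Adj a c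
  · simp only [hac, if_true]
    have hbridge : ∀ w', (if BridgeAdj w w' a c then
        F ((sierpinskiGraph G (m + 1)).degree (Fin.snoc w a))
          ((sierpinskiGraph G (m + 1)).degree (Fin.snoc w' c)) else 0) =
        if BridgeAdj w w' a c then F (G.degree a + 1) (G.degree c + 1) else 0 := by
      intro w'
      split_ifs with h
      · rw [degree_sierpinskiGraph_snoc, degree_sierpinskiGraph_snoc,
          if_pos ⟨c, hac, h.endsWithRun_left⟩, if_pos ⟨a, hac.symm, h.endsWithRun_right⟩]
      · rfl
    rw [sum_congr rfl fun w' _ ↦ hbridge w', ← sum_filter, sum_const, card_bridgeAdj hac.ne,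
      ite_smul, one_smul, zero_smul, degree_sierpinskiGraph_snoc, degree_sierpinskiGraph_snoc]
  · simp only [hac, if_false]

/-- `g i j` is the weight of the dart `(w a, w c)` of `S(G, m + 2)` when `ε(w, a) = i` and
`ε(w, c) = j`; the first four terms sum it over the `n ^ (m + 1)` words `w` by inclusion–exclusion,
the last one sums the weights of the bridge darts `(w a, w' c)`. -/
noncomputable def sierpinskiDartWeight (n m : ℕ) (α : ℝ) (p q : ℕ) : ℝ :=
  let g : ℕ → ℕ → ℝ := fun i j ↦ (((p + i : ℕ) : ℝ) * ((q + j : ℕ) : ℝ)) ^ α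
  (n : ℝ) ^ (m + 1) * g 0 0 + p * psi n (m + 1) * (g 1 0 - g 0 0) +
    q * psi n (m + 1) * (g 0 1 - g 0 0) + (p + q) * psi n m * (g 1 1 - g 1 0 - g 0 1 + g 0 0) +
      psi n (m + 1) * g 1 1

theorem two_mul_randic_sierpinskiGraph (hG : G.CliqueFree 3) (m : ℕ) (α : ℝ) :
    2 * randic (sierpinskiGraph G (m + 2)) α = ∑ a, ∑ c, if G.Adj a c then
      sierpinskiDartWeight (Fintype.card V) m α (G.degree a) (G.degree c) else 0 := by
  rw [SimpleGraph.two_mul_randic, Fintype.sum_fun_fin_succ]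
  refine sum_congr rfl fun a _ ↦ ?_
  simp only [sum_adj_sierpinskiGraph_snoc_degree G fun p q ↦ ((p : ℝ) * q) ^ α]
  rw [sum_comm]
  refine sum_congr rfl fun c _ ↦ ?_
  by_cases hac : G.Adj a c
  · simp only [if_pos hac, sum_add_distrib]
    rw [Fintype.sum_boole_boole (HasBridge G · a) (HasBridge G · c)
      fun i j ↦ (((G.degree a + i : ℕ) : ℝ) * (G.degree c + j : ℕ)) ^ α]
    rw [← sum_filter, sum_const, card_endsWithRun hac.ne', card_hasBridge, card_hasBridge,
      card_hasBridge_and_hasBridge G hG hac, sierpinskiDartWeight]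
    simp only [Fintype.card_fun, Fintype.card_fin, nsmul_eq_mul]
    push_cast
    ring
  · simp [hac]

end

namespace SimpleGraph

instance (n : ℕ) : DecidableRel (pathGraph n).Adj :=
  fun _ _ ↦ decidable_of_iff _ pathGraph_adj.symm

variable {n : ℕ}

theorem ite_pathGraph_adj {M : Type*} [AddCommMonoid M] (a c : Fin n) (x : M) :
    (if (pathGraph n).Adj a c then x else 0) =
      (if a.val + 1 = c.val then x else 0) + if c.val + 1 = a.val then x else 0 := by
  by_cases h₁ : a.val + 1 = c.val
  · have h₂ : c.val + 1 ≠ a.val := by omega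
    simp [pathGraph_adj, h₁, h₂]
  · by_cases h₂ : c.val + 1 = a.val <;> simp [pathGraph_adj, h₁, h₂]

theorem degree_pathGraph (a : Fin (n + 2)) :
    (pathGraph (n + 2)).degree a = if a.val = 0 ∨ a.val = n + 1 then 1 else 2 := by
  have hsucc : #{c : Fin (n + 2) | a.val + 1 = c.val} = if a.val ≠ n + 1 then 1 else 0 :=
    card_filter_eq_ite ⟨fun h ↦ ⟨⟨a.val + 1, by omega⟩, rfl⟩, fun ⟨c, hc⟩ ↦ by omega⟩
      fun c c' hc hc' ↦ Fin.ext (by omega)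
  have hpred : #{c : Fin (n + 2) | c.val + 1 = a.val} = if a.val ≠ 0 then 1 else 0 :=
    card_filter_eq_ite ⟨fun h ↦ ⟨⟨a.val - 1, by omega⟩, Nat.sub_add_cancel (by omega)⟩,
      fun ⟨c, hc⟩ ↦ by omega⟩
      fun c c' hc hc' ↦ Fin.ext (by omega)
  rw [← card_neighborFinset_eq_degree, neighborFinset_eq_filter, card_filter]
  simp only [ite_pathGraph_adj, sum_add_distrib, ← card_filter, hsucc, hpred]
  split_ifs <;> omega

theorem sum_sum_adj_pathGraph {M : Type*} [AddCommMonoid M]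
    (f : Fin (n + 1) → Fin (n + 1) → M) :
    ∑ a, ∑ c, (if (pathGraph (n + 1)).Adj a c then f a c else 0) =
      ∑ i : Fin n, (f i.castSucc i.succ + f i.succ i.castSucc) := by
  have hsucc : ∀ (a : Fin (n + 1)) (i : Fin n), a.val + 1 = i.succ.val ↔ a = i.castSucc := by
    simp [Fin.ext_iff]
  simp only [ite_pathGraph_adj, sum_add_distrib]
  congr 1
  · rw [sum_comm, Fin.sum_univ_succ]
    simp only [Fin.val_zero, Nat.add_one_ne_zero, if_false, sum_const_zero, zero_add, hsucc,
      sum_ite_eq', mem_univ, if_true]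
  · rw [Fin.sum_univ_succ]
    simp only [Fin.val_zero, Nat.add_one_ne_zero, if_false, sum_const_zero, zero_add, hsucc,
      sum_ite_eq', mem_univ, if_true]

theorem sum_sum_adj_pathGraph_degree {M : Type*} [AddCommMonoid M] (N : ℕ) (F : ℕ → ℕ → M) :
    ∑ a, ∑ c, (if (pathGraph (N + 3)).Adj a c then
      F ((pathGraph (N + 3)).degree a) ((pathGraph (N + 3)).degree c) else 0) =
        2 • (F 1 2 + F 2 1) + (2 * N) • F 2 2 := by
  have hend : ∀ a : Fin (N + 3), a.val = 0 ∨ a.val = N + 2 → (pathGraph (N + 3)).degree a = 1 :=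
    fun a h ↦ by rw [degree_pathGraph, if_pos h]
  have hinner : ∀ a : Fin (N + 3), 0 < a.val → a.val < N + 2 → (pathGraph (N + 3)).degree a = 2 :=
    fun a h₀ h₁ ↦ by rw [degree_pathGraph, if_neg (by omega)]
  have hmid : ∀ j : Fin N,
      F ((pathGraph (N + 3)).degree j.castSucc.succ.castSucc)
          ((pathGraph (N + 3)).degree j.castSucc.succ.succ) +
        F ((pathGraph (N + 3)).degree j.castSucc.succ.succ)
          ((pathGraph (N + 3)).degree j.castSucc.succ.castSucc) = F 2 2 + F 2 2 := fun j ↦ by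
    rw [hinner _ (by simp) (by simp), hinner _ (by simp) (by simp)]
  rw [sum_sum_adj_pathGraph, Fin.sum_univ_succ, Fin.sum_univ_castSucc,
    sum_congr rfl fun j _ ↦ hmid j, hend (Fin.castSucc 0) (by simp),
    hinner (Fin.succ 0) (by simp) (by simp),
    hinner (Fin.last N).succ.castSucc (by simp) (by simp), hend (Fin.last N).succ.succ (by simp),
    sum_const, card_univ, Fintype.card_fin, mul_nsmul, two_nsmul (F 2 2)]
  abel

end SimpleGraph

theorem randic_sierpinski_path {n t : ℕ} (hn : 3 ≤ n) (ht : 2 ≤ t) (α : ℝ) :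
    randic (sierpinskiGraph (SimpleGraph.pathGraph n) t) α =
      (2 : ℝ) ^ α * (n : ℝ) ^ (t - 2) * ((n : ℝ) - 3) *
          ((2 : ℝ) ^ α * (n : ℝ) - (2 : ℝ) ^ (α + 2) + 2) +
        (3 : ℝ) ^ α * ((2 : ℝ) ^ (α + 2) * ((n : ℝ) - 3) *
              ((n : ℝ) ^ (t - 2) - (psi n (t - 2) : ℝ)) +
            4 * (n : ℝ) ^ (t - 2) - 2 * (psi n (t - 2) : ℝ)) +
        (2 : ℝ) ^ (2 * α + 1) * ((n : ℝ) ^ (t - 2) - 2 * (psi n (t - 2) : ℝ)) +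
        (3 : ℝ) ^ α * ((3 : ℝ) ^ α * ((n : ℝ) - 3) *
              ((n : ℝ) ^ (t - 2) + 5 * (psi n (t - 2) : ℝ)) +
            (2 : ℝ) ^ (α + 1) * ((n : ℝ) ^ (t - 2) + 4 * (psi n (t - 2) : ℝ))) := by
  obtain ⟨N, rfl⟩ : ∃ N, n = N + 3 := ⟨n - 3, by omega⟩
  obtain ⟨m, rfl⟩ : ∃ m, t = m + 2 := ⟨t - 2, by omega⟩
  have h := two_mul_randic_sierpinskiGraph (SimpleGraph.pathGraph (N + 3))
    ((SimpleGraph.pathGraph.bicoloring _).colorable.cliqueFree (by simp)) m α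
  rw [SimpleGraph.sum_sum_adj_pathGraph_degree, Fintype.card_fin] at h
  have e4 : (4 : ℝ) ^ α = 2 ^ α * 2 ^ α := by
    rw [show (4 : ℝ) = 2 * 2 by norm_num, Real.mul_rpow (by norm_num) (by norm_num)]
  have e6 : (6 : ℝ) ^ α = 2 ^ α * 3 ^ α := by
    rw [show (6 : ℝ) = 2 * 3 by norm_num, Real.mul_rpow (by norm_num) (by norm_num)]
  have e9 : (9 : ℝ) ^ α = 3 ^ α * 3 ^ α := by
    rw [show (9 : ℝ) = 3 * 3 by norm_num, Real.mul_rpow (by norm_num) (by norm_num)]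
  have e2 : ∀ k : ℕ, (2 : ℝ) ^ (α + k) = 2 ^ α * 2 ^ k := fun k ↦ by
    rw [Real.rpow_add (by norm_num), Real.rpow_natCast]
  have e2' : (2 : ℝ) ^ (2 * α + 1) = 2 ^ α * 2 ^ α * 2 := by
    rw [Real.rpow_add (by norm_num), two_mul, Real.rpow_add (by norm_num), Real.rpow_one]
  have hpsi : psi (N + 3) (m + 1) = psi (N + 3) m + (N + 3) ^ m := sum_range_succ _ _
  simp only [sierpinskiDartWeight, hpsi, Nat.add_sub_cancel] at h ⊢
  push_cast at h ⊢
  norm_num at h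
  rw [show α + 2 = α + (2 : ℕ) by norm_num, show α + 1 = α + (1 : ℕ) by norm_num, e2, e2, e2']
  simp only [e4, e6, e9] at h
  linear_combination h / 2
end

section
/- Let G = (U_1 ∪ U_2, E) be a connected bipartite (δ_1,δ_2)-semiregular graph of order n = n_1 + n_2, where |U_1| = n_1 and |U_2| = n_2, and let α be a real number. Then R_α(P(G,1)) = n^α·(n_1(δ_1+1)^α + n_2(δ_2+1)^α) + n_1δ_1·((δ_1+1)(δ_2+1))^α. -/
open Finset

/-- `P(G,1)`: the graph obtained from `G` by adding one new vertex adjacent to every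
vertex of `G`. -/
def cone {V : Type*} (G : SimpleGraph V) : SimpleGraph (Option V) :=
  SimpleGraph.fromRel fun u v => u = none ∨ ∃ a b, u = some a ∧ v = some b ∧ G.Adj a b

/-!
In `P(G,1)` the apex has degree `n` and every vertex `v` of `G` has degree `d(v) + 1`. The edges
of `P(G,1)` are the `n` spokes at the apex, of weight `(n (d(v) + 1))^α`, and the edges of `G`;
as each of these joins `U₁` to `U₂`, all of them have weight `((δ₁ + 1)(δ₂ + 1))^α`, and counting
them at their endpoints in `U₁` gives `n₁ δ₁` of them.
-/

open SimpleGraph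

lemma Finset.sum_univ_eq_card_nsmul_add_card_nsmul {ι M : Type*} [Fintype ι] [DecidableEq ι]
    [AddCommMonoid M] {s t : Finset ι} (hdisj : Disjoint s t) (hcover : s ∪ t = univ)
    {f : ι → M} {a b : M} (hs : ∀ i ∈ s, f i = a) (ht : ∀ i ∈ t, f i = b) :
    ∑ i, f i = #s • a + #t • b := by
  rw [← hcover, sum_union hdisj, sum_congr rfl hs, sum_congr rfl ht, sum_const, sum_const]

section RandicWeight

variable {V : Type*}

noncomputable def randicWeight (d : V → ℕ) (α : ℝ) : Sym2 V → ℝ :=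
  Sym2.lift ⟨fun u v => ((d u : ℝ) * d v) ^ α, fun u v => by dsimp only; rw [mul_comm]⟩

@[simp]
lemma randicWeight_mk (d : V → ℕ) (α : ℝ) (u v : V) :
    randicWeight d α s(u, v) = ((d u : ℝ) * d v) ^ α := rfl

lemma randicWeight_map {W : Type*} (f : V → W) (d : W → ℕ) (α : ℝ) (e : Sym2 V) :
    randicWeight d α (e.map f) = randicWeight (d ∘ f) α e := by
  induction e using Sym2.ind with
  | _ u v => rfl

lemma randic_eq_sum_randicWeight [Fintype V] (G : SimpleGraph V) [DecidableRel G.Adj]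
    [Fintype G.edgeSet] (α : ℝ) :
    randic G α = ∑ e ∈ G.edgeFinset, randicWeight (fun v => G.degree v) α e := by
  unfold randic randicWeight
  congr!

lemma SimpleGraph.IsBipartiteWith.sum_randicWeight_eq [Fintype V] {G : SimpleGraph V}
    [Fintype G.edgeSet] {s t : Set V} (h : G.IsBipartiteWith s t) {d : V → ℕ} {a b : ℕ}
    (hs : ∀ v ∈ s, d v = a) (ht : ∀ v ∈ t, d v = b) (α : ℝ) :
    ∑ e ∈ G.edgeFinset, randicWeight d α e = #G.edgeFinset * ((a : ℝ) * b) ^ α := by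
  have hedge : ∀ e ∈ G.edgeFinset, randicWeight d α e = ((a : ℝ) * b) ^ α := by
    intro e he
    induction e using Sym2.ind with
    | _ u v =>
      rcases h.mem_of_adj (mem_edgeFinset.1 he) with ⟨hu, hv⟩ | ⟨hu, hv⟩
      · simp [hs u hu, ht v hv]
      · simp [ht u hu, hs v hv, mul_comm]
  rw [sum_congr rfl hedge, sum_const, nsmul_eq_mul]

end RandicWeight

section Cone

variable {V : Type*} (G : SimpleGraph V)

@[simp]
lemma cone_adj_none_some (a : V) : (cone G).Adj none (some a) := by
  simp [cone]

@[simp]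
lemma cone_adj_some_none (a : V) : (cone G).Adj (some a) none :=
  (cone_adj_none_some G a).symm

@[simp]
lemma cone_adj_some_some (a b : V) : (cone G).Adj (some a) (some b) ↔ G.Adj a b := by
  simpa [cone, G.adj_comm b a] using G.ne_of_adj

variable [Fintype V]

lemma cone_neighborFinset_none [DecidableRel (cone G).Adj] :
    (cone G).neighborFinset none = univ.map .some := by
  ext (_ | a) <;> simp

lemma cone_neighborFinset_some [DecidableRel G.Adj] [DecidableRel (cone G).Adj] (a : V) :
    (cone G).neighborFinset (some a) =
      cons none ((G.neighborFinset a).map .some) (by simp) := by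
  ext (_ | b) <;> simp

lemma cone_degree_none [DecidableRel (cone G).Adj] : (cone G).degree none = Fintype.card V := by
  rw [← card_neighborFinset_eq_degree, cone_neighborFinset_none, card_map, card_univ]

lemma cone_degree_some [DecidableRel G.Adj] [DecidableRel (cone G).Adj] (a : V) :
    (cone G).degree (some a) = G.degree a + 1 := by
  rw [← card_neighborFinset_eq_degree, cone_neighborFinset_some, card_cons, card_map,
    card_neighborFinset_eq_degree]

lemma cone_edgeFinset [DecidableEq V] [DecidableRel G.Adj] [Fintype (cone G).edgeSet] :
    (cone G).edgeFinset = univ.map (Function.Embedding.some.trans (Sym2.mkEmbedding none)) ∪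
      G.edgeFinset.map Function.Embedding.some.sym2Map := by
  ext e
  induction e using Sym2.ind with
  | _ x y =>
    cases x <;> cases y <;> simp [Sym2.exists]
    exact ⟨fun h => ⟨_, _, h, .inl ⟨rfl, rfl⟩⟩,
      by rintro ⟨x, y, h, ⟨rfl, rfl⟩ | ⟨rfl, rfl⟩⟩ <;> simp [h, h.symm]⟩

theorem randic_cone [DecidableEq V] [DecidableRel G.Adj] (α : ℝ) :
    randic (cone G) α = ∑ v, ((Fintype.card V : ℝ) * (G.degree v + 1)) ^ α +
      ∑ e ∈ G.edgeFinset, randicWeight (fun v => G.degree v + 1) α e := by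
  classical
  rw [randic_eq_sum_randicWeight, cone_edgeFinset, sum_union, sum_map, sum_map]
  · simp [cone_degree_none, cone_degree_some, randicWeight_map, Function.comp_def]
  · simp [Finset.disjoint_left, Sym2.forall]

end Cone

theorem randic_cone_semiregular_general {V : Type*} [Fintype V] [DecidableEq V] (G : SimpleGraph V)
    [DecidableRel G.Adj] (U1 U2 : Finset V)
    (hdisj : Disjoint U1 U2) (hcover : U1 ∪ U2 = Finset.univ)
    (hbip : ∀ x y, G.Adj x y → (x ∈ U1 ∧ y ∈ U2) ∨ (x ∈ U2 ∧ y ∈ U1))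
    (δ1 δ2 n1 n2 n : ℕ)
    (hd1 : ∀ x ∈ U1, G.degree x = δ1) (hd2 : ∀ x ∈ U2, G.degree x = δ2)
    (hn1 : U1.card = n1) (hn2 : U2.card = n2)
    (hcard : Fintype.card V = n) (α : ℝ) :
    randic (cone G) α =
      (n : ℝ) ^ α * ((n1 : ℝ) * ((δ1 : ℝ) + 1) ^ α + (n2 : ℝ) * ((δ2 : ℝ) + 1) ^ α) +
        (n1 : ℝ) * (δ1 : ℝ) * (((δ1 : ℝ) + 1) * ((δ2 : ℝ) + 1)) ^ α := by
  have hG : G.IsBipartiteWith U1 U2 := ⟨disjoint_coe.2 hdisj, hbip⟩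
  have hedges : #G.edgeFinset = n1 * δ1 := by
    rw [← isBipartiteWith_sum_degrees_eq_card_edges hG, sum_const_nat hd1, hn1]
  rw [randic_cone, hcard,
    sum_univ_eq_card_nsmul_add_card_nsmul hdisj hcover (fun v hv => by rw [hd1 v hv])
      (fun v hv => by rw [hd2 v hv]),
    hG.sum_randicWeight_eq (a := δ1 + 1) (b := δ2 + 1) (fun v hv => by rw [hd1 v hv])
      (fun v hv => by rw [hd2 v hv]), hedges, hn1, hn2, nsmul_eq_mul, nsmul_eq_mul,
    Real.mul_rpow (by positivity) (by positivity), Real.mul_rpow (by positivity) (by positivity)]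
  push_cast
  ring

theorem randic_cone_semiregular {V : Type*} [Fintype V] [DecidableEq V] (G : SimpleGraph V)
    [DecidableRel G.Adj] (hconn : G.Connected) (U1 U2 : Finset V)
    (hdisj : Disjoint U1 U2) (hcover : U1 ∪ U2 = Finset.univ)
    (hbip : ∀ x y, G.Adj x y → (x ∈ U1 ∧ y ∈ U2) ∨ (x ∈ U2 ∧ y ∈ U1))
    (δ1 δ2 n1 n2 n : ℕ)
    (hd1 : ∀ x ∈ U1, G.degree x = δ1) (hd2 : ∀ x ∈ U2, G.degree x = δ2)
    (hn1 : U1.card = n1) (hn2 : U2.card = n2) (hn : n = n1 + n2)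
    (hcard : Fintype.card V = n) (α : ℝ) :
    randic (cone G) α =
      (n : ℝ) ^ α * ((n1 : ℝ) * ((δ1 : ℝ) + 1) ^ α + (n2 : ℝ) * ((δ2 : ℝ) + 1) ^ α) +
        (n1 : ℝ) * (δ1 : ℝ) * (((δ1 : ℝ) + 1) * ((δ2 : ℝ) + 1)) ^ α :=
  randic_cone_semiregular_general G U1 U2 hdisj hcover hbip δ1 δ2 n1 n2 n hd1 hd2 hn1 hn2 hcard α
end
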